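/- arXiv:2209.04740 — 2 statements merged into one kernel-verified Lean document; each statement's English description precedes it below -/
import Mathlib

section
/- Let d and i be integers with 1 ≤ i < d, and let H(d,i) = {(v_1,...,v_d) ∈ {0,1}^d : v_1 + v_2 + ... + v_i is even}. Then λ(H(d,i),d) = C(d,i) · i^i · (d−i)^{d−i} / d^d. -/
open Filter

namespace CubeDensity

/-- The automorphism of `Q_d` given by permuting coordinates by `σ` and then
complementing the values in the coordinates where `ε` is `true`. -/
def autMap (d : ℕ) (σ : Equiv.Perm (Fin d)) (ε : Fin d → Bool) (v : Fin d → Bool) :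
    Fin d → Bool :=
  fun i => xor (v (σ⁻¹ i)) (ε i)

/-- `K` is an exact copy of `H` in `Q_d`: some automorphism of `Q_d` maps `H` onto `K`. -/
def ExactCopy (d : ℕ) (H K : Set (Fin d → Bool)) : Prop :=
  ∃ σ : Equiv.Perm (Fin d), ∃ ε : Fin d → Bool, autMap d σ ε '' H = K

/-- The vertex of `Q_n` in the sub-`d`-cube with flip coordinates `F` (and fixed values `g`
outside `F`) corresponding to the vertex `u` of `Q_d`, identifying the flip coordinates
with `Fin d` in increasing order. -/
def embed {n d : ℕ} (F : Finset (Fin n)) (hF : F.card = d) (g : Fin n → Bool)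
    (u : Fin d → Bool) : Fin n → Bool :=
  fun i => if h : i ∈ F then u ((F.orderIsoOfFin hF).symm ⟨i, h⟩) else g i

/-- The sub-`d`-cube of `Q_n` with flip coordinates `F` and fixed values `g` outside `F`
is `H`-good for `S`: the configuration induced by `S` on it is an exact copy of `H`. -/
def IsGood {n d : ℕ} (H : Set (Fin d → Bool)) (S : Set (Fin n → Bool))
    (F : Finset (Fin n)) (hF : F.card = d) (g : Fin n → Bool) : Prop :=
  ExactCopy d H {u : Fin d → Bool | embed F hF g u ∈ S}

/-- The number of `H`-good sub-`d`-cubes of `Q_n`, where a sub-`d`-cube is encoded as a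
pair `(F, g)` with `F` the `d`-element set of flip coordinates and `g` the fixed values
outside `F` (normalized to be `false` on `F`). -/
noncomputable def goodCount (d : ℕ) (H : Set (Fin d → Bool)) (n : ℕ)
    (S : Set (Fin n → Bool)) : ℕ :=
  Nat.card {p : Finset (Fin n) × (Fin n → Bool) //
    ∃ hF : p.1.card = d, (∀ i ∈ p.1, p.2 i = false) ∧ IsGood H S p.1 hF p.2}

/-- `g(H,d,n,S)`: the fraction of the `C(n,d) * 2^(n-d)` sub-`d`-cubes of `Q_n` that are
`H`-good for `S`. -/
noncomputable def gFrac (d : ℕ) (H : Set (Fin d → Bool)) (n : ℕ)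
    (S : Set (Fin n → Bool)) : ℝ :=
  (goodCount d H n S : ℝ) / ((n.choose d : ℝ) * 2 ^ (n - d))

/-- `ex(H,d,n)`: the maximum over all `S ⊆ {0,1}^n` of the fraction of `H`-good
sub-`d`-cubes. -/
noncomputable def exD (d : ℕ) (H : Set (Fin d → Bool)) (n : ℕ) : ℝ :=
  ⨆ S : Set (Fin n → Bool), gFrac d H n S

end CubeDensity

/-!
`H(d,i)` is the parity set `{u | ∑_{j ∈ A} u_j = 0}` for `A = {1, …, i}`, and its exact copies
in `Q_d` are precisely the parity sets `{u | ∑_{j ∈ A} u_j = c}` with `|A| = i`.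

Upper bound: for `x ∈ Q_n` let `B(x)` be the set of coordinates whose flip moves `x` into or out
of `S`. If the sub-cube with flip set `F` is good, then `|F ∩ B(x)| = i` at each of its vertices
`x`, so double counting pairs (good sub-cube, vertex) gives
`2^d · #good ≤ ∑_x C(|B(x)|, i) C(n - |B(x)|, d - i)`. By weighted AM-GM,
`C(b, i) C(n - b, d - i) ≤ i^i (d-i)^(d-i) n^d / (d^d i! (d-i)!)`, hence
`g ≤ λ · n^d / (d! C(n, d))` with `λ = C(d,i) i^i (d-i)^(d-i) / d^d`.

Lower bound: if `S` is the parity set of a set `M` of `m` coordinates, every sub-cube whose flip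
set meets `M` in exactly `i` coordinates is good, so `ex ≥ C(m, i) C(n - m, d - i) / C(n, d)`.
With `m = ⌊i n / d⌋` both bounds tend to `λ`.
-/

open Finset Filter Topology
open scoped Nat

namespace CubeDensity

lemma card_filter_card_inter_eq {α : Type*} [Fintype α] [DecidableEq α] (B : Finset α)
    {d i : ℕ} (hi : i ≤ d) :
    #{F : Finset α | #F = d ∧ #(F ∩ B) = i}
      = (#B).choose i * (Fintype.card α - #B).choose (d - i) := by
  rw [← card_compl, ← card_powersetCard, ← card_powersetCard, ← card_product]
  refine card_nbij' (fun F => (F ∩ B, F \ B)) (fun p => p.1 ∪ p.2) ?_ ?_ ?_ ?_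
  · intro F hF
    rw [mem_coe, mem_filter_univ] at hF
    have := card_inter_add_card_sdiff F B
    simp only [mem_coe, mem_product, mem_powersetCard]
    exact ⟨⟨inter_subset_right, hF.2⟩, fun x hx => mem_compl.mpr (mem_sdiff.mp hx).2,
      by omega⟩
  · rintro ⟨A, C⟩ hAC
    simp only [mem_coe, mem_product, mem_powersetCard, subset_compl_iff_disjoint_right] at hAC
    obtain ⟨⟨hAB, rfl⟩, hCB, hC⟩ := hAC
    rw [mem_coe, mem_filter_univ, card_union_of_disjoint (disjoint_of_subset_left hAB hCB.symm),
      union_inter_distrib_right, inter_eq_left.mpr hAB, disjoint_iff_inter_eq_empty.mp hCB,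
      union_empty]
    omega
  · intro F _
    exact sup_inf_sdiff F B
  · rintro ⟨A, C⟩ hAC
    simp only [mem_coe, mem_product, mem_powersetCard, subset_compl_iff_disjoint_right] at hAC
    have hA : ∀ x ∈ A, x ∈ B := fun x hx => hAC.1.1 hx
    have hC : ∀ x ∈ C, x ∉ B := fun x hx => disjoint_left.mp hAC.2.1 hx
    ext x <;> grind

lemma card_subtype_prod {α β : Type*} [Fintype α] [Fintype β] (P : α → β → Prop) :
    Nat.card {q : α × β // P q.1 q.2} = ∑ x, Nat.card {y // P x y} := by
  classical
  simp only [Nat.card_eq_fintype_card, Fintype.card_subtype, card_filter, Fintype.sum_prod_type]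

lemma card_fun_bool_eq_false_on {ι : Type*} [Fintype ι] [DecidableEq ι] (F : Finset ι) :
    Nat.card {g : ι → Bool // ∀ j ∈ F, g j = false} = 2 ^ (Fintype.card ι - #F) := by
  have hcoord : ∀ j, Nat.card {b : Bool // j ∈ F → b = false} = if j ∈ F then 1 else 2 := by
    intro j
    split_ifs with hj <;> simp [hj]
  rw [Nat.card_congr (Equiv.subtypePiEquivPi (p := fun j b => j ∈ F → b = false)), Nat.card_pi]
  simp only [hcoord]
  rw [prod_ite, prod_const_one, one_mul, prod_const, filter_not, card_sdiff]
  simp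

section Parity

variable {ι : Type*}

def parity (A : Finset ι) (u : ι → Bool) : ZMod 2 := ∑ j ∈ A, ((u j).toNat : ZMod 2)

def paritySet (A : Finset ι) (c : ZMod 2) : Set (ι → Bool) := {u | parity A u = c}

lemma mem_paritySet {A : Finset ι} {c : ZMod 2} {u : ι → Bool} :
    u ∈ paritySet A c ↔ parity A u = c := Iff.rfl

lemma setOf_even_sum_toNat_eq_paritySet (A : Finset ι) :
    {v : ι → Bool | Even (∑ j ∈ A, (v j).toNat)} = paritySet A 0 := by
  ext v
  rw [mem_paritySet, parity, ← Nat.cast_sum, ZMod.natCast_eq_zero_iff_even]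
  rfl

lemma parity_update_not [DecidableEq ι] (A : Finset ι) (u : ι → Bool) (a : ι) :
    parity A (Function.update u a (!u a)) = parity A u + if a ∈ A then 1 else 0 := by
  have hflip : ∀ j, ((Function.update u a (!u a) j).toNat : ZMod 2)
      = (u j).toNat + if j = a then 1 else 0 := by
    intro j
    rcases eq_or_ne j a with rfl | hne
    · rw [Function.update_self, if_pos rfl]
      cases u j <;> rfl
    · simp [hne]
  simp only [parity, hflip, sum_add_distrib, sum_ite_eq']

lemma update_not_mem_paritySet_iff [DecidableEq ι] {A : Finset ι} {c : ZMod 2}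
    {u : ι → Bool} {a : ι} :
    (Function.update u a (!u a) ∈ paritySet A c ↔ u ∈ paritySet A c) ↔ a ∉ A := by
  simp only [mem_paritySet, parity_update_not]
  by_cases ha : a ∈ A
  · simp only [ha, if_true, not_true_eq_false, iff_false]
    generalize parity A u = s
    revert s c; decide
  · simp [ha]

end Parity

lemma autMap_image_paritySet {d : ℕ} (σ : Equiv.Perm (Fin d)) (ε : Fin d → Bool)
    (A : Finset (Fin d)) (c : ZMod 2) :
    autMap d σ ε '' paritySet A c
      = paritySet (A.map σ.toEmbedding) (c + parity A (ε ∘ σ)) := by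
  have hpar : ∀ v, parity (A.map σ.toEmbedding) (autMap d σ ε v)
      = parity A v + parity A (ε ∘ σ) := by
    intro v
    have hxor : ∀ a b : Bool, ((xor a b).toNat : ZMod 2) = a.toNat + b.toNat := by decide
    simp [parity, autMap, hxor, sum_add_distrib]
  ext w
  constructor
  · rintro ⟨v, hv, rfl⟩
    rw [mem_paritySet, hpar, mem_paritySet.mp hv]
  · intro hw
    set v : Fin d → Bool := fun a => xor (w (σ a)) (ε (σ a))
    have hvw : autMap d σ ε v = w := by funext j; simp [v, autMap]
    refine ⟨v, ?_, hvw⟩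
    have := hpar v
    rw [hvw, mem_paritySet.mp hw] at this
    rw [mem_paritySet]
    linear_combination -this

lemma ExactCopy.eq_paritySet {d : ℕ} {A₀ : Finset (Fin d)} {K : Set (Fin d → Bool)}
    (h : ExactCopy d (paritySet A₀ 0) K) :
    ∃ A : Finset (Fin d), #A = #A₀ ∧ ∃ c, K = paritySet A c := by
  obtain ⟨σ, ε, rfl⟩ := h
  exact ⟨_, card_map _, _, autMap_image_paritySet σ ε A₀ 0⟩

lemma exactCopy_paritySet {d : ℕ} {A₀ A : Finset (Fin d)} (hA₀ : A₀.Nonempty)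
    (hA : #A = #A₀) (c : ZMod 2) : ExactCopy d (paritySet A₀ 0) (paritySet A c) := by
  obtain ⟨σ, hσ⟩ := Equiv.Perm.exists_map_finset_eq A₀ A hA.symm
  obtain ⟨a, ha⟩ := hA₀
  -- complementing the single coordinate `σ a` when `c = 1` shifts the parity to `c`
  refine ⟨σ, fun j => decide (j = σ a ∧ c = 1), ?_⟩
  have hε : ∀ b, ((decide (σ b = σ a ∧ c = 1)).toNat : ZMod 2) = if b = a then c else 0 := by
    intro b
    by_cases hb : b = a
    · subst hb
      simp only [true_and]
      fin_cases c <;> rfl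
    · simp [hb]
  rw [autMap_image_paritySet, hσ, zero_add]
  simp only [parity, Function.comp_apply, hε, sum_ite_eq', if_pos ha]

section Embed

variable {n d : ℕ} (F : Finset (Fin n)) (hF : #F = d) (g : Fin n → Bool)

lemma embed_orderEmbOfFin (u : Fin d → Bool) (a : Fin d) :
    embed F hF g u (F.orderEmbOfFin hF a) = u a := by
  have hmem : F.orderEmbOfFin hF a ∈ F := F.orderEmbOfFin_mem hF a
  have hsymm : (F.orderIsoOfFin hF).symm ⟨_, hmem⟩ = a := by
    rw [OrderIso.symm_apply_eq]; ext; simp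
  simp only [embed, hmem, dif_pos, hsymm]

lemma embed_of_notMem (u : Fin d → Bool) {j : Fin n} (hj : j ∉ F) :
    embed F hF g u j = g j := by
  simp [embed, hj]

lemma exists_orderEmbOfFin_eq {j : Fin n} (hj : j ∈ F) : ∃ a, F.orderEmbOfFin hF a = j := by
  rw [← Set.mem_range, range_orderEmbOfFin]; exact hj

lemma embed_update_not (u : Fin d → Bool) (a : Fin d) :
    Function.update (embed F hF g u) (F.orderEmbOfFin hF a)
        (!embed F hF g u (F.orderEmbOfFin hF a))
      = embed F hF g (Function.update u a (!u a)) := by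
  funext k
  by_cases hk : k ∈ F
  · obtain ⟨b, rfl⟩ := exists_orderEmbOfFin_eq F hF hk
    simp only [embed_orderEmbOfFin, Function.update_apply, (F.orderEmbOfFin hF).injective.eq_iff]
  · have hka : k ≠ F.orderEmbOfFin hF a := fun h => hk (h ▸ F.orderEmbOfFin_mem hF a)
    rw [Function.update_of_ne hka, embed_of_notMem F hF g _ hk, embed_of_notMem F hF g _ hk]

lemma map_filter_orderEmbOfFin_mem (M : Finset (Fin n)) :
    ({a | F.orderEmbOfFin hF a ∈ M} : Finset (Fin d)).map (F.orderEmbOfFin hF).toEmbedding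
      = M ∩ F := by
  ext j
  simp only [Finset.mem_map, mem_filter_univ, mem_inter]
  constructor
  · rintro ⟨a, ha, rfl⟩
    exact ⟨ha, F.orderEmbOfFin_mem hF a⟩
  · rintro ⟨hjM, hjF⟩
    obtain ⟨a, rfl⟩ := exists_orderEmbOfFin_eq F hF hjF
    exact ⟨a, hjM, rfl⟩

lemma parity_embed (M : Finset (Fin n)) (u : Fin d → Bool) :
    parity M (embed F hF g u)
      = parity {a | F.orderEmbOfFin hF a ∈ M} u + parity (M \ F) g := by
  rw [parity, ← sum_inter_add_sum_sdiff M F, ← map_filter_orderEmbOfFin_mem F hF, sum_map]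
  congr 1
  · exact sum_congr rfl fun a _ => by rw [RelEmbedding.coe_toEmbedding, embed_orderEmbOfFin]
  · exact sum_congr rfl fun j hj => by rw [embed_of_notMem F hF g u (mem_sdiff.mp hj).2]

lemma isGood_paritySet {A₀ : Finset (Fin d)} (hA₀ : A₀.Nonempty) {M : Finset (Fin n)}
    (hM : #(F ∩ M) = #A₀) : IsGood (paritySet A₀ 0) (paritySet M 0) F hF g := by
  have hS : {u | embed F hF g u ∈ paritySet M 0}
      = paritySet {a | F.orderEmbOfFin hF a ∈ M} (parity (M \ F) g) := by
    ext u
    simp only [Set.mem_ofPred_eq, mem_paritySet, parity_embed]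
    exact add_eq_zero_iff_eq_neg.trans (by rw [ZMod.neg_eq_self_mod_two])
  rw [IsGood, hS]
  refine exactCopy_paritySet hA₀ ?_ _
  rw [← hM, inter_comm, ← map_filter_orderEmbOfFin_mem F hF, card_map]

end Embed

lemma embed_inj_of_eq_false {n d : ℕ} {F : Finset (Fin n)} {hF : #F = d} {g g' : Fin n → Bool}
    {u u' : Fin d → Bool} (hg : ∀ j ∈ F, g j = false) (hg' : ∀ j ∈ F, g' j = false)
    (h : embed F hF g u = embed F hF g' u') : g = g' ∧ u = u' := by
  refine ⟨funext fun j => ?_, funext fun a => ?_⟩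
  · by_cases hj : j ∈ F
    · rw [hg j hj, hg' j hj]
    · rw [← embed_of_notMem F hF g u hj, h, embed_of_notMem F hF g' u' hj]
  · rw [← embed_orderEmbOfFin F hF g u a, h, embed_orderEmbOfFin]

open Classical in
noncomputable def sensitiveSet {ι : Type*} [Fintype ι] [DecidableEq ι] (S : Set (ι → Bool))
    (x : ι → Bool) : Finset ι :=
  {j | ¬(Function.update x j (!x j) ∈ S ↔ x ∈ S)}

lemma mem_sensitiveSet {ι : Type*} [Fintype ι] [DecidableEq ι] {S : Set (ι → Bool)}
    {x : ι → Bool} {j : ι} :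
    j ∈ sensitiveSet S x ↔ ¬(Function.update x j (!x j) ∈ S ↔ x ∈ S) := by
  simp [sensitiveSet]

lemma inter_sensitiveSet_embed {n d : ℕ} {F : Finset (Fin n)} {hF : #F = d} {g : Fin n → Bool}
    {S : Set (Fin n → Bool)} {A : Finset (Fin d)} {c : ZMod 2}
    (hS : {u | embed F hF g u ∈ S} = paritySet A c) (u : Fin d → Bool) :
    F ∩ sensitiveSet S (embed F hF g u) = A.map (F.orderEmbOfFin hF).toEmbedding := by
  have hmem : ∀ v, embed F hF g v ∈ S ↔ v ∈ paritySet A c := fun v => by rw [← hS]; rfl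
  ext j
  by_cases hj : j ∈ F
  · obtain ⟨a, rfl⟩ := exists_orderEmbOfFin_eq F hF hj
    rw [mem_inter, mem_sensitiveSet, embed_update_not, hmem, hmem,
      update_not_mem_paritySet_iff, not_not]
    exact (and_iff_right hj).trans (Finset.mem_map' (F.orderEmbOfFin hF).toEmbedding).symm
  · have : j ∉ A.map (F.orderEmbOfFin hF).toEmbedding := fun h => by
      obtain ⟨a, -, rfl⟩ := Finset.mem_map.mp h
      exact hj (F.orderEmbOfFin_mem hF a)
    simp [hj, this]

lemma card_inter_sensitiveSet_of_isGood {n d : ℕ} {A₀ : Finset (Fin d)}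
    {S : Set (Fin n → Bool)} {F : Finset (Fin n)} {hF : #F = d} {g : Fin n → Bool}
    (h : IsGood (paritySet A₀ 0) S F hF g) (u : Fin d → Bool) :
    #(F ∩ sensitiveSet S (embed F hF g u)) = #A₀ := by
  obtain ⟨A, hA, c, hS⟩ := ExactCopy.eq_paritySet h
  rw [inter_sensitiveSet_embed hS, card_map, hA]

lemma goodCount_mul_le {n d : ℕ} {A₀ : Finset (Fin d)} (hA₀ : #A₀ ≤ d)
    (S : Set (Fin n → Bool)) :
    goodCount d (paritySet A₀ 0) n S * 2 ^ d
      ≤ ∑ x, (#(sensitiveSet S x)).choose #A₀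
          * (n - #(sensitiveSet S x)).choose (d - #A₀) := by
  calc goodCount d (paritySet A₀ 0) n S * 2 ^ d
      = Nat.card ({p : Finset (Fin n) × (Fin n → Bool) //
          ∃ hF : #p.1 = d, (∀ j ∈ p.1, p.2 j = false) ∧
            IsGood (paritySet A₀ 0) S p.1 hF p.2}
          × (Fin d → Bool)) := by simp [goodCount]
    _ ≤ Nat.card {q : (Fin n → Bool) × Finset (Fin n) //
          #q.2 = d ∧ #(q.2 ∩ sensitiveSet S q.1) = #A₀} := by
      refine Nat.card_le_card_of_injective
        (fun p => ⟨(embed p.1.1.1 p.1.2.fst p.1.1.2 p.2, p.1.1.1), p.1.2.fst,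
          card_inter_sensitiveSet_of_isGood p.1.2.snd.2 p.2⟩) ?_
      intro ⟨⟨⟨F, g⟩, hF, hg, _⟩, u⟩ ⟨⟨⟨F', g'⟩, hF', hg', _⟩, u'⟩ h
      simp only [Subtype.mk.injEq, Prod.mk.injEq] at h
      obtain ⟨hx, rfl⟩ := h
      obtain ⟨rfl, rfl⟩ := embed_inj_of_eq_false hg hg' hx
      rfl
    _ = ∑ x, (#(sensitiveSet S x)).choose #A₀
          * (n - #(sensitiveSet S x)).choose (d - #A₀) := by
      classical
      rw [card_subtype_prod (fun x F => #F = d ∧ #(F ∩ sensitiveSet S x) = #A₀)]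
      refine sum_congr rfl fun x _ => ?_
      rw [Nat.card_eq_fintype_card, Fintype.card_subtype, card_filter_card_inter_eq _ hA₀,
        Fintype.card_fin]

lemma choose_mul_choose_mul_pow_le_goodCount {n d : ℕ} {A₀ : Finset (Fin d)}
    (hA₀ : A₀.Nonempty) (hd : #A₀ ≤ d) (M : Finset (Fin n)) :
    (#M).choose #A₀ * (n - #M).choose (d - #A₀) * 2 ^ (n - d)
      ≤ goodCount d (paritySet A₀ 0) n (paritySet M 0) := by
  classical
  calc (#M).choose #A₀ * (n - #M).choose (d - #A₀) * 2 ^ (n - d)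
      = ∑ F : Finset (Fin n), if #F = d ∧ #(F ∩ M) = #A₀ then 2 ^ (n - d) else 0 := by
        rw [← sum_filter, sum_const, smul_eq_mul, card_filter_card_inter_eq M hd,
          Fintype.card_fin]
    _ = Nat.card {p : Finset (Fin n) × (Fin n → Bool) //
          (#p.1 = d ∧ #(p.1 ∩ M) = #A₀) ∧ ∀ j ∈ p.1, p.2 j = false} := by
        rw [card_subtype_prod (fun (F : Finset (Fin n)) (g : Fin n → Bool) =>
          (#F = d ∧ #(F ∩ M) = #A₀) ∧ ∀ j ∈ F, g j = false)]
        refine sum_congr rfl fun F _ => ?_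
        split_ifs with hF
        · simp only [hF, true_and, card_fun_bool_eq_false_on, Fintype.card_fin]
        · simp [hF]
    _ ≤ goodCount d (paritySet A₀ 0) n (paritySet M 0) :=
        Nat.card_le_card_of_injective
          (fun p => ⟨p.1, p.2.1.1, p.2.2, isGood_paritySet _ p.2.1.1 _ hA₀ p.2.1.2⟩)
          (fun _ _ h => Subtype.ext (by simpa only [Subtype.mk.injEq] using h))

lemma pow_mul_pow_le_mul_add_pow {i j : ℕ} (hi : 0 < i) (hj : 0 < j) {x y : ℝ} (hx : 0 ≤ x)
    (hy : 0 ≤ y) :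
    ((i + j : ℕ) : ℝ) ^ (i + j) * (x ^ i * y ^ j)
      ≤ (i : ℝ) ^ i * j ^ j * (x + y) ^ (i + j) := by
  set d : ℝ := ((i + j : ℕ) : ℝ)
  have hi' : (0 : ℝ) < i := by exact_mod_cast hi
  have hj' : (0 : ℝ) < j := by exact_mod_cast hj
  have hd : 0 < d := by positivity
  have hp₁ : 0 ≤ d * x / i := by positivity
  have hp₂ : 0 ≤ d * y / j := by positivity
  -- weighted AM-GM for `d x / i` and `d y / j` with weights `i / d` and `j / d`
  have hamgm := Real.geom_mean_le_arith_mean2_weighted (w₁ := i / d) (w₂ := j / d)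
    (by positivity) (by positivity) hp₁ hp₂ (by field_simp; push_cast [d]; ring)
  have hsum : (i : ℝ) / d * (d * x / i) + j / d * (d * y / j) = x + y := by field_simp
  rw [hsum] at hamgm
  have hpow := pow_le_pow_left₀ (by positivity) hamgm (i + j)
  rw [mul_pow, ← Real.rpow_natCast, ← Real.rpow_natCast (_ ^ _), ← Real.rpow_mul hp₁,
    ← Real.rpow_mul hp₂] at hpow
  rw [div_mul_cancel₀ _ hd.ne', div_mul_cancel₀ _ hd.ne', Real.rpow_natCast, Real.rpow_natCast,
    div_pow, div_pow, div_mul_div_comm, div_le_iff₀ (by positivity)] at hpow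
  calc d ^ (i + j) * (x ^ i * y ^ j) = (d * x) ^ i * (d * y) ^ j := by ring
    _ ≤ (x + y) ^ (i + j) * (i ^ i * j ^ j) := hpow
    _ = _ := by ring

lemma choose_mul_factorial_le_pow (b k : ℕ) : (b.choose k : ℝ) * k ! ≤ (b : ℝ) ^ k :=
  (le_div_iff₀ (by positivity)).mp (Nat.choose_le_pow_div k b)

noncomputable def parityDensity (d i : ℕ) : ℝ :=
  (d.choose i : ℝ) * (i : ℝ) ^ i * ((d - i : ℕ) : ℝ) ^ (d - i) / (d : ℝ) ^ d

lemma choose_mul_choose_le_parityDensity {i d b n : ℕ} (hi : 0 < i) (hid : i < d) (hb : b ≤ n) :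
    (b.choose i * (n - b).choose (d - i) : ℝ) ≤ parityDensity d i / d ! * n ^ d := by
  obtain ⟨j, hj, rfl⟩ : ∃ j, 0 < j ∧ d = i + j := ⟨d - i, by omega, by omega⟩
  have hnb : (((n - b : ℕ)) : ℝ) = n - b := Nat.cast_sub hb
  have hfact : ((i + j)! : ℝ) = (i + j).choose i * (i ! * j !) := by
    have := Nat.choose_mul_factorial_mul_factorial (Nat.le_add_right i j)
    rw [Nat.add_sub_cancel_left] at this
    rw [← mul_assoc]; exact_mod_cast this.symm
  rw [parityDensity, Nat.add_sub_cancel_left, hfact]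
  have key : ((i + j : ℕ) : ℝ) ^ (i + j) * (i ! * j !) * (b.choose i * (n - b).choose j)
      ≤ (i : ℝ) ^ i * j ^ j * n ^ (i + j) :=
    calc ((i + j : ℕ) : ℝ) ^ (i + j) * (i ! * j !) * (b.choose i * (n - b).choose j)
        = ((i + j : ℕ) : ℝ) ^ (i + j) * ((b.choose i * i !) * ((n - b).choose j * j !)) := by
          ring
      _ ≤ ((i + j : ℕ) : ℝ) ^ (i + j) * ((b : ℝ) ^ i * ((n - b : ℕ) : ℝ) ^ j) := by
        gcongr <;> exact choose_mul_factorial_le_pow _ _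
      _ ≤ (i : ℝ) ^ i * j ^ j * (b + (n - b : ℕ)) ^ (i + j) :=
        pow_mul_pow_le_mul_add_pow hi hj (Nat.cast_nonneg _) (Nat.cast_nonneg _)
      _ = (i : ℝ) ^ i * j ^ j * n ^ (i + j) := by rw [hnb, add_sub_cancel]
  have : (0 : ℝ) < (i + j).choose i := by exact_mod_cast Nat.choose_pos (by omega)
  field_simp
  linarith

lemma gFrac_paritySet_le {n d : ℕ} {A₀ : Finset (Fin d)} (h0 : 0 < #A₀) (hd : #A₀ < d)
    (hn : d ≤ n) (S : Set (Fin n → Bool)) :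
    gFrac d (paritySet A₀ 0) n S ≤ parityDensity d #A₀ / d ! * (n ^ d / n.choose d) := by
  have hcount : (goodCount d (paritySet A₀ 0) n S : ℝ) * 2 ^ d
      ≤ 2 ^ n * (parityDensity d #A₀ / d ! * n ^ d) :=
    calc _ ≤ ((∑ x, (#(sensitiveSet S x)).choose #A₀
              * (n - #(sensitiveSet S x)).choose (d - #A₀) : ℕ) : ℝ) := by
          exact_mod_cast goodCount_mul_le hd.le S
      _ ≤ ∑ _x : Fin n → Bool, parityDensity d #A₀ / d ! * n ^ d := by
        push_cast
        exact sum_le_sum fun x _ => choose_mul_choose_le_parityDensity h0 hd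
          (card_le_univ _ |>.trans_eq (Fintype.card_fin n))
      _ = _ := by simp
  have h2n : (2 : ℝ) ^ n = 2 ^ (n - d) * 2 ^ d := by rw [← pow_add, Nat.sub_add_cancel hn]
  have hchoose : (0 : ℝ) < n.choose d := by exact_mod_cast Nat.choose_pos hn
  rw [gFrac, div_le_iff₀ (by positivity)]
  calc (goodCount d (paritySet A₀ 0) n S : ℝ)
      = goodCount d (paritySet A₀ 0) n S * 2 ^ d / 2 ^ d := by field_simp
    _ ≤ 2 ^ n * (parityDensity d #A₀ / d ! * n ^ d) / 2 ^ d := by gcongr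
    _ = _ := by rw [h2n]; field_simp

lemma exD_paritySet_le {n d : ℕ} {A₀ : Finset (Fin d)} (h0 : 0 < #A₀) (hd : #A₀ < d)
    (hn : d ≤ n) :
    exD d (paritySet A₀ 0) n ≤ parityDensity d #A₀ / d ! * (n ^ d / n.choose d) :=
  ciSup_le (gFrac_paritySet_le h0 hd hn)

lemma le_exD_paritySet {n d m : ℕ} {A₀ : Finset (Fin d)} (hA₀ : A₀.Nonempty)
    (hd : #A₀ ≤ d) (hm : m ≤ n) :
    (m.choose #A₀ * (n - m).choose (d - #A₀) : ℝ) / n.choose d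
      ≤ exD d (paritySet A₀ 0) n := by
  obtain ⟨M, -, rfl⟩ := exists_subset_card_eq (s := (univ : Finset (Fin n))) (by simpa using hm)
  calc ((#M).choose #A₀ * (n - #M).choose (d - #A₀) : ℝ) / n.choose d
      = ((#M).choose #A₀ * (n - #M).choose (d - #A₀) * 2 ^ (n - d) : ℕ)
          / (n.choose d * 2 ^ (n - d)) := by
        push_cast; rw [mul_div_mul_right _ _ (by positivity)]
    _ ≤ gFrac d (paritySet A₀ 0) n (paritySet M 0) := by
        unfold gFrac
        gcongr
        exact choose_mul_choose_mul_pow_le_goodCount hA₀ hd M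
    _ ≤ exD d (paritySet A₀ 0) n := le_ciSup (Set.finite_range _).bddAbove _

lemma tendsto_natCast_sub_div {a : ℕ → ℕ} {α : ℝ}
    (ha : Tendsto (fun n => (a n : ℝ) / n) atTop (𝓝 α)) (k : ℕ) :
    Tendsto (fun n => ((a n - k : ℕ) : ℝ) / n) atTop (𝓝 α) := by
  have hk : Tendsto (fun n : ℕ => (a n : ℝ) / n - k / n) atTop (𝓝 α) := by
    simpa using ha.sub (tendsto_const_div_atTop_nhds_zero_nat (k : ℝ))
  refine tendsto_of_tendsto_of_tendsto_of_le_of_le hk ha (fun n => ?_) (fun n => ?_)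
  · have : (a n : ℝ) ≤ ((a n - k : ℕ) : ℝ) + k := by
      exact_mod_cast (by omega : a n ≤ (a n - k) + k)
    rw [← sub_div]
    gcongr
    linarith
  · gcongr
    exact_mod_cast Nat.sub_le (a n) k

lemma tendsto_choose_div_pow {a : ℕ → ℕ} {α : ℝ}
    (ha : Tendsto (fun n => (a n : ℝ) / n) atTop (𝓝 α)) (k : ℕ) :
    Tendsto (fun n => ((a n).choose k : ℝ) / n ^ k) atTop (𝓝 (α ^ k / k !)) := by
  have hlow := ((tendsto_natCast_sub_div ha k).pow k).div_const (k ! : ℝ)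
  refine tendsto_of_tendsto_of_tendsto_of_le_of_le hlow ((ha.pow k).div_const _)
    (fun n => ?_) (fun n => ?_)
  · calc ((a n - k : ℕ) / n : ℝ) ^ k / k !
        = ((a n - k : ℕ) : ℝ) ^ k / k ! / n ^ k := by ring
      _ ≤ ((a n + 1 - k : ℕ) : ℝ) ^ k / k ! / n ^ k := by gcongr; omega
      _ ≤ (a n).choose k / n ^ k := by gcongr; exact Nat.pow_le_choose k (a n)
  · calc ((a n).choose k : ℝ) / n ^ k ≤ (a n : ℝ) ^ k / k ! / n ^ k := by
          gcongr; exact Nat.choose_le_pow_div k (a n)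
      _ = ((a n : ℝ) / n) ^ k / k ! := by ring

lemma tendsto_pow_div_choose (d : ℕ) :
    Tendsto (fun n : ℕ => (n : ℝ) ^ d / n.choose d) atTop (𝓝 (d ! : ℝ)) := by
  have hid : Tendsto (fun n : ℕ => (n : ℝ) / n) atTop (𝓝 1) :=
    tendsto_const_nhds.congr' <| (eventually_ne_atTop 0).mono fun n hn =>
      (div_self (Nat.cast_ne_zero.mpr hn)).symm
  simpa using (tendsto_choose_div_pow hid d).inv₀ (by positivity)

lemma tendsto_choose_mul_choose_div_choose {i d : ℕ} (hid : i ≤ d) {m : ℕ → ℕ} {α : ℝ}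
    (hm : ∀ n, m n ≤ n) (hα : Tendsto (fun n => (m n : ℝ) / n) atTop (𝓝 α)) :
    Tendsto (fun n => ((m n).choose i * (n - m n).choose (d - i) : ℝ) / n.choose d) atTop
      (𝓝 (α ^ i / i ! * ((1 - α) ^ (d - i) / (d - i)!) * d !)) := by
  have hcompl : Tendsto (fun n => ((n - m n : ℕ) : ℝ) / n) atTop (𝓝 (1 - α)) := by
    refine (tendsto_const_nhds.sub hα).congr' <| (eventually_ne_atTop 0).mono fun n hn => ?_
    dsimp only
    rw [Nat.cast_sub (hm n), sub_div, div_self (Nat.cast_ne_zero.mpr hn)]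
  refine (((tendsto_choose_div_pow hα i).mul (tendsto_choose_div_pow hcompl (d - i))).mul
    (tendsto_pow_div_choose d)).congr' <| (eventually_ne_atTop 0).mono fun n hn => ?_
  have hn0 : (n : ℝ) ≠ 0 := Nat.cast_ne_zero.mpr hn
  have hpow : (n : ℝ) ^ d = n ^ i * n ^ (d - i) := by rw [← pow_add, Nat.add_sub_cancel' hid]
  rw [hpow]
  field_simp

lemma parityDensity_eq {d i : ℕ} (hid : i ≤ d) (hd : 0 < d) :
    parityDensity d i
      = ((i : ℝ) / d) ^ i / i ! * ((1 - (i : ℝ) / d) ^ (d - i) / (d - i)!) * d ! := by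
  have hd' : (d : ℝ) ≠ 0 := by positivity
  have hcompl : 1 - (i : ℝ) / d = ((d - i : ℕ) : ℝ) / d := by
    rw [Nat.cast_sub hid]; field_simp
  have hpow : (d : ℝ) ^ d = d ^ i * d ^ (d - i) := by rw [← pow_add, Nat.add_sub_cancel' hid]
  rw [parityDensity, hcompl, Nat.cast_choose ℝ hid, div_pow, div_pow, hpow]
  field_simp

end CubeDensity

open CubeDensity

/-- λ(H(d,i), d) = C(d,i) · iⁱ · (d−i)^{d−i} / d^d, where
`H(d,i) = {v ∈ {0,1}^d : v₁ + ⋯ + v_i is even}`. -/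
theorem dCubeDensity_H_d_i (d i : ℕ) (h1 : 1 ≤ i) (h2 : i < d) :
    Filter.Tendsto
      (fun n => CubeDensity.exD d
        {v : Fin d → Bool |
          Even (∑ j ∈ Finset.univ.filter (fun j : Fin d => (j : ℕ) < i), (v j).toNat)} n)
      Filter.atTop
      (nhds ((d.choose i : ℝ) * (i : ℝ) ^ i * ((d - i : ℕ) : ℝ) ^ (d - i) / (d : ℝ) ^ d)) := by
  set A₀ : Finset (Fin d) := {j | (j : ℕ) < i}
  have hA₀ : #A₀ = i := by simp [A₀, Fin.card_filter_val_lt, h2.le]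
  have hA₀ne : A₀.Nonempty := card_pos.mp (hA₀ ▸ h1)
  rw [setOf_even_sum_toNat_eq_paritySet]
  change Tendsto _ atTop (𝓝 (parityDensity d i))
  set m : ℕ → ℕ := fun n => ⌊(i / d : ℝ) * n⌋₊
  have hm : ∀ n, m n ≤ n := fun n => Nat.floor_le_of_le <|
    mul_le_of_le_one_left n.cast_nonneg <|
      div_le_one_of_le₀ (by exact_mod_cast h2.le) d.cast_nonneg
  have hα : Tendsto (fun n => (m n : ℝ) / n) atTop (𝓝 (i / d)) :=
    (tendsto_nat_floor_mul_div_atTop (by positivity)).comp tendsto_natCast_atTop_atTop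
  have hlower := tendsto_choose_mul_choose_div_choose h2.le hm hα
  rw [← parityDensity_eq h2.le (by omega)] at hlower
  have hupper := (tendsto_pow_div_choose d).const_mul (parityDensity d i / d !)
  rw [div_mul_cancel₀ _ (by positivity)] at hupper
  refine tendsto_of_tendsto_of_tendsto_of_le_of_le' hlower hupper ?_ ?_
  · exact Eventually.of_forall fun n => hA₀ ▸ le_exD_paritySet hA₀ne (hA₀ ▸ h2.le) (hm n)
  · filter_upwards [eventually_ge_atTop d] with n hn
    exact hA₀ ▸ exD_paritySet_le (hA₀ ▸ h1) (hA₀ ▸ h2) hn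
end

section
/- Let W_8 ⊆ {0,1}^3 be the configuration W_8 = {(1,1,0),(1,0,1),(0,1,1)} in Q_3 (the three vertices of weight 2). Then λ(W_8,3) ≥ 2/3. -/
open Filter

/-!
Deleting a coordinate `j ∉ F` turns a good sub-`d`-cube `(F, g)` of `Q_{n+1}` into a good
sub-`d`-cube of the facet `x_j = g j`, a copy of `Q_n`. Each good cube is counted by `n + 1 - d`
of the `2(n+1)` facets, and averaging gives `ex(H,d,n+1) ≤ ex(H,d,n)`; so `λ` exists as the limit
of a monotone bounded sequence.

For the lower bound take `S = {x : |x| ≡ 0 (mod 3)}`. A sub-3-cube whose fixed part has weight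
`w ≢ 0 (mod 3)` meets `S` in its vertices of weight 2 (if `w ≡ 1`) or in those of weight 1 (if
`w ≡ 2`), and both are exact copies of `W₈`. The sizes of the subsets of an `m`-set are
equidistributed modulo 3 up to an error of one, so at most `(2^(n-3) + 2)/3` of the `2^(n-3)`
fixed parts are bad, whence `ex(W₈,3,n) ≥ 2/3 - (2/3)·2^(3-n)`.
-/

namespace CubeDensity

open Finset Topology

variable {n d : ℕ}

section Facets

noncomputable def removeCoord (j : Fin (n + 1)) (F : Finset (Fin (n + 1))) : Finset (Fin n) :=
  F.preimage j.succAbove Fin.succAbove_right_injective.injOn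

def slice (j : Fin (n + 1)) (b : Bool) (S : Set (Fin (n + 1) → Bool)) : Set (Fin n → Bool) :=
  {x | Fin.insertNth j b x ∈ S}

variable {j : Fin (n + 1)} {F : Finset (Fin (n + 1))}

lemma mem_removeCoord {k : Fin n} : k ∈ removeCoord j F ↔ j.succAbove k ∈ F :=
  mem_preimage

lemma map_removeCoord (hj : j ∉ F) : (removeCoord j F).map j.succAboveEmb = F := by
  ext i
  simp only [Finset.mem_map, Fin.succAboveEmb_apply, mem_removeCoord]
  constructor
  · rintro ⟨k, hk, rfl⟩
    exact hk
  · intro hi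
    obtain ⟨k, rfl⟩ := Fin.exists_succAbove_eq (ne_of_mem_of_not_mem hi hj)
    exact ⟨k, hi, rfl⟩

lemma removeCoord_inj {F₁ F₂ : Finset (Fin (n + 1))} (hj₁ : j ∉ F₁) (hj₂ : j ∉ F₂) :
    removeCoord j F₁ = removeCoord j F₂ ↔ F₁ = F₂ :=
  ⟨fun h => by rw [← map_removeCoord hj₁, ← map_removeCoord hj₂, h], congrArg _⟩

lemma card_removeCoord (hj : j ∉ F) : #(removeCoord j F) = #F := by
  conv_rhs => rw [← map_removeCoord hj, card_map]

lemma succAbove_orderEmbOfFin_removeCoord (hF : #F = d) (hF' : #(removeCoord j F) = d)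
    (a : Fin d) : j.succAbove ((removeCoord j F).orderEmbOfFin hF' a) = F.orderEmbOfFin hF a :=
  congrFun (orderEmbOfFin_unique hF
    (fun a => mem_removeCoord.mp (orderEmbOfFin_mem _ hF' a))
    ((Fin.strictMono_succAbove j).comp ((removeCoord j F).orderEmbOfFin hF').strictMono)) a

lemma embed_succAbove (hF : #F = d) (hF' : #(removeCoord j F) = d) (g : Fin (n + 1) → Bool)
    (u : Fin d → Bool) (k : Fin n) :
    embed F hF g u (j.succAbove k) = embed (removeCoord j F) hF' (Fin.removeNth j g) u k := by
  by_cases hk : k ∈ removeCoord j F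
  · rw [embed, embed, dif_pos (mem_removeCoord.mp hk), dif_pos hk]
    congr 1
    rw [OrderIso.symm_apply_eq]
    apply Subtype.ext
    rw [coe_orderIsoOfFin_apply, ← succAbove_orderEmbOfFin_removeCoord hF hF',
      ← coe_orderIsoOfFin_apply, OrderIso.apply_symm_apply]
  · rw [embed, embed, dif_neg (mt mem_removeCoord.mpr hk), dif_neg hk, Fin.removeNth]

lemma embed_eq_insertNth (hF : #F = d) (hj : j ∉ F) (hF' : #(removeCoord j F) = d)
    (g : Fin (n + 1) → Bool) (u : Fin d → Bool) :
    embed F hF g u = Fin.insertNth j (g j) (embed (removeCoord j F) hF' (Fin.removeNth j g) u) := by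
  rw [← Fin.insertNth_self_removeNth j (embed F hF g u)]
  congr 1
  · exact dif_neg hj
  · exact funext (embed_succAbove hF hF' g u)

lemma isGood_iff_slice (H : Set (Fin d → Bool)) (S : Set (Fin (n + 1) → Bool)) (hF : #F = d)
    (hj : j ∉ F) (hF' : #(removeCoord j F) = d) (g : Fin (n + 1) → Bool) :
    IsGood H S F hF g ↔ IsGood H (slice j (g j) S) (removeCoord j F) hF' (Fin.removeNth j g) := by
  simp only [IsGood, slice, Set.mem_ofPred_eq, embed_eq_insertNth hF hj hF']

end Facets

section Monotonicity

open Classical in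
noncomputable def goodCubes (d : ℕ) (H : Set (Fin d → Bool)) (n : ℕ) (S : Set (Fin n → Bool)) :
    Finset (Finset (Fin n) × (Fin n → Bool)) :=
  {p | ∃ hF : #p.1 = d, (∀ i ∈ p.1, p.2 i = false) ∧ IsGood H S p.1 hF p.2}

lemma goodCount_eq_card_goodCubes (H : Set (Fin d → Bool)) (S : Set (Fin n → Bool)) :
    goodCount d H n S = #(goodCubes d H n S) := by
  classical
  rw [goodCount, goodCubes, Nat.card_eq_fintype_card, Fintype.card_subtype]

/-- A good sub-`d`-cube `(F, g)` of `Q_{n+1}` is, for each of the `n + 1 - d` coordinates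
`j ∉ F`, a good sub-`d`-cube of the facet `x_j = g j`. -/
lemma mul_goodCount_succ_le (H : Set (Fin d → Bool)) (S : Set (Fin (n + 1) → Bool)) :
    (n + 1 - d) * goodCount d H (n + 1) S ≤
      ∑ jb : Fin (n + 1) × Bool, goodCount d H n (slice jb.1 jb.2 S) := by
  classical
  set G := goodCubes d H (n + 1) S
  have hG : ∀ p ∈ G, #p.1ᶜ = n + 1 - d := by
    intro p hp
    obtain ⟨hF, -, -⟩ := (mem_filter.mp hp).2
    rw [card_compl, hF, Fintype.card_fin]
  calc (n + 1 - d) * goodCount d H (n + 1) S = #(G.sigma fun p => p.1ᶜ) := by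
        rw [card_sigma, sum_congr rfl hG, sum_const, smul_eq_mul, mul_comm,
          goodCount_eq_card_goodCubes]
    _ ≤ #(univ.sigma fun jb : Fin (n + 1) × Bool => goodCubes d H n (slice jb.1 jb.2 S)) := by
        refine card_le_card_of_injOn
          (fun q => ⟨(q.2, q.1.2 q.2), (removeCoord q.2 q.1.1, Fin.removeNth q.2 q.1.2)⟩) ?_ ?_
        · rintro ⟨⟨F, g⟩, j⟩ hq
          obtain ⟨hp, hj⟩ := mem_sigma.mp hq
          obtain ⟨hF, hg, hgood⟩ := (mem_filter.mp hp).2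
          have hjF : j ∉ F := mem_compl.mp hj
          have hF' : #(removeCoord j F) = d := (card_removeCoord hjF).trans hF
          refine mem_sigma.mpr ⟨mem_univ _, mem_filter.mpr ⟨mem_univ _, hF', ?_, ?_⟩⟩
          · exact fun k hk => hg _ (mem_removeCoord.mp hk)
          · exact (isGood_iff_slice H S hF hjF hF' g).mp hgood
        · rintro ⟨⟨F₁, g₁⟩, j₁⟩ hq₁ ⟨⟨F₂, g₂⟩, j₂⟩ hq₂ h
          simp only [Sigma.mk.inj_iff, Prod.mk.injEq, heq_eq_eq] at h
          obtain ⟨⟨rfl, hgj⟩, hF, hg⟩ := h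
          have hj₁ : j₁ ∉ F₁ := mem_compl.mp (mem_sigma.mp hq₁).2
          have hj₂ : j₁ ∉ F₂ := mem_compl.mp (mem_sigma.mp hq₂).2
          rw [removeCoord_inj hj₁ hj₂] at hF
          have hg : g₁ = g₂ := by
            rw [← Fin.insertNth_self_removeNth j₁ g₁, ← Fin.insertNth_self_removeNth j₁ g₂,
              hgj, hg]
          rw [hF, hg]
    _ = ∑ jb : Fin (n + 1) × Bool, goodCount d H n (slice jb.1 jb.2 S) := by
        simp only [card_sigma, goodCount_eq_card_goodCubes]

lemma gFrac_nonneg (H : Set (Fin d → Bool)) (S : Set (Fin n → Bool)) : 0 ≤ gFrac d H n S := by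
  unfold gFrac
  positivity

lemma bddAbove_range_gFrac (d : ℕ) (H : Set (Fin d → Bool)) (n : ℕ) :
    BddAbove (Set.range (gFrac d H n)) := by
  refine ⟨Nat.card (Finset (Fin n) × (Fin n → Bool)) / ((n.choose d : ℝ) * 2 ^ (n - d)), ?_⟩
  rintro _ ⟨S, rfl⟩
  refine div_le_div_of_nonneg_right ?_ (by positivity)
  exact_mod_cast Nat.card_le_card_of_injective Subtype.val Subtype.val_injective

lemma gFrac_le_exD (H : Set (Fin d → Bool)) (S : Set (Fin n → Bool)) :
    gFrac d H n S ≤ exD d H n :=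
  le_ciSup (bddAbove_range_gFrac d H n) S

lemma exD_nonneg (H : Set (Fin d → Bool)) : 0 ≤ exD d H n :=
  (gFrac_nonneg H ∅).trans (gFrac_le_exD H ∅)

lemma goodCount_le_exD_mul (H : Set (Fin d → Bool)) (S : Set (Fin n → Bool)) (hd : d ≤ n) :
    (goodCount d H n S : ℝ) ≤ exD d H n * ((n.choose d : ℝ) * 2 ^ (n - d)) := by
  have hpos : (0 : ℝ) < (n.choose d : ℝ) * 2 ^ (n - d) := by
    have := Nat.choose_pos hd
    positivity
  exact (div_le_iff₀ hpos).mp (gFrac_le_exD H S)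

lemma sub_mul_choose_mul_pow_succ (hd : d ≤ n) :
    ((n + 1 - d : ℕ) : ℝ) * (((n + 1).choose d : ℝ) * 2 ^ (n + 1 - d)) =
      2 * (n + 1) * ((n.choose d : ℝ) * 2 ^ (n - d)) := by
  have hchoose : (((n + 1).choose d * (n + 1 - d) : ℕ) : ℝ) = ((n.choose d * (n + 1) : ℕ) : ℝ) := by
    rw [Nat.choose_mul_succ_eq]
  rw [show n + 1 - d = n - d + 1 by omega] at hchoose ⊢
  rw [pow_succ]
  push_cast at hchoose ⊢
  linear_combination (2 : ℝ) ^ (n - d) * 2 * hchoose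

lemma exD_succ_le (H : Set (Fin d → Bool)) (hd : d ≤ n) : exD d H (n + 1) ≤ exD d H n := by
  refine ciSup_le fun S => ?_
  have hpos : (0 : ℝ) < ((n + 1).choose d : ℝ) * 2 ^ (n + 1 - d) := by
    have := Nat.choose_pos (hd.trans n.le_succ)
    positivity
  have hsub : (0 : ℝ) < ((n + 1 - d : ℕ) : ℝ) := by exact_mod_cast Nat.sub_pos_of_lt (by omega)
  rw [gFrac, div_le_iff₀ hpos, ← mul_le_mul_iff_of_pos_left hsub]
  calc ((n + 1 - d : ℕ) : ℝ) * goodCount d H (n + 1) S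
      ≤ ∑ jb : Fin (n + 1) × Bool, (goodCount d H n (slice jb.1 jb.2 S) : ℝ) := by
        exact_mod_cast mul_goodCount_succ_le H S
    _ ≤ ∑ _jb : Fin (n + 1) × Bool, exD d H n * ((n.choose d : ℝ) * 2 ^ (n - d)) :=
        sum_le_sum fun jb _ => goodCount_le_exD_mul H _ hd
    _ = ((n + 1 - d : ℕ) : ℝ) * (exD d H n * (((n + 1).choose d : ℝ) * 2 ^ (n + 1 - d))) := by
        rw [sum_const, card_univ, Fintype.card_prod, Fintype.card_fin, Fintype.card_bool,
          nsmul_eq_mul, mul_left_comm ((n + 1 - d : ℕ) : ℝ), sub_mul_choose_mul_pow_succ hd]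
        push_cast
        ring

lemma exists_tendsto_exD (d : ℕ) (H : Set (Fin d → Bool)) :
    ∃ L, Tendsto (exD d H) atTop (𝓝 L) := by
  have hanti : Antitone fun m => exD d H (m + d) :=
    antitone_nat_of_succ_le fun m => by
      simpa only [Nat.add_right_comm m 1 d] using exD_succ_le H (Nat.le_add_left d m)
  have hbdd : BddBelow (Set.range fun m => exD d H (m + d)) :=
    ⟨0, by rintro _ ⟨m, rfl⟩; exact exD_nonneg H⟩
  exact ⟨_, (tendsto_add_atTop_iff_nat d).mp (tendsto_atTop_ciInf hanti hbdd)⟩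

end Monotonicity

section SubsetsModThree

variable {α : Type*}

def modThreeCount (s : Finset α) (r : ℕ) : ℕ :=
  #{T ∈ s.powerset | #T % 3 = r}

lemma modThreeCount_insert [DecidableEq α] {a : α} {s : Finset α} (ha : a ∉ s) {r : ℕ}
    (hr : r < 3) :
    modThreeCount (insert a s) r = modThreeCount s r + modThreeCount s ((r + 2) % 3) := by
  unfold modThreeCount
  rw [powerset_insert, filter_union, card_union_of_disjoint, filter_image,
    card_image_of_injOn]
  · congr 2
    ext T
    simp only [mem_filter, mem_powerset, and_congr_right_iff]
    intro hT
    rw [card_insert_of_notMem fun h => ha (hT h)]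
    omega
  · intro T hT U hU hTU
    simp only [coe_filter, mem_powerset, Set.mem_ofPred_eq] at hT hU
    rw [← erase_insert fun h => ha (hT.1 h), ← erase_insert fun h => ha (hU.1 h)]
    exact congrArg (·.erase a) hTU
  · refine disjoint_filter_filter (disjoint_left.mpr fun T hT hT' => ?_)
    obtain ⟨U, -, rfl⟩ := mem_image.mp hT'
    exact ha (mem_powerset.mp hT (mem_insert_self a U))

lemma modThreeCount_le_add_one (s : Finset α) {r r' : ℕ} (hr : r < 3) (hr' : r' < 3) :
    modThreeCount s r ≤ modThreeCount s r' + 1 := by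
  classical
  induction s using Finset.induction_on generalizing r r' with
  | empty =>
    have : modThreeCount (∅ : Finset α) r ≤ 1 := (card_filter_le _ _).trans (by simp)
    omega
  | insert a s ha ih =>
    rw [modThreeCount_insert ha hr, modThreeCount_insert ha hr']
    have := ih (r := 0) (r' := 1) (by norm_num) (by norm_num)
    have := ih (r := 0) (r' := 2) (by norm_num) (by norm_num)
    have := ih (r := 1) (r' := 0) (by norm_num) (by norm_num)
    have := ih (r := 1) (r' := 2) (by norm_num) (by norm_num)
    have := ih (r := 2) (r' := 0) (by norm_num) (by norm_num)
    have := ih (r := 2) (r' := 1) (by norm_num) (by norm_num)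
    interval_cases r <;> interval_cases r' <;> simp only [Nat.reduceAdd, Nat.reduceMod] <;> omega

lemma sum_modThreeCount (s : Finset α) :
    modThreeCount s 0 + modThreeCount s 1 + modThreeCount s 2 = 2 ^ #s := by
  have h := card_eq_sum_card_fiberwise (f := fun T : Finset α => #T % 3) (s := s.powerset)
    (t := range 3) fun T _ => mem_range.mpr (Nat.mod_lt _ (by norm_num))
  rw [card_powerset, sum_range_succ, sum_range_succ, sum_range_one] at h
  rw [h]
  rfl

lemma three_mul_modThreeCount_zero_le (s : Finset α) :
    3 * modThreeCount s 0 ≤ 2 ^ #s + 2 := by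
  have h₁ := modThreeCount_le_add_one s (r := 0) (r' := 1) (by norm_num) (by norm_num)
  have h₂ := modThreeCount_le_add_one s (r := 0) (r' := 2) (by norm_num) (by norm_num)
  have := sum_modThreeCount s
  omega

end SubsetsModThree

section Construction

def weight {m : ℕ} (x : Fin m → Bool) : ℕ := #{i | x i = true}

lemma weight_indicator {m : ℕ} (T : Finset (Fin m)) : weight (fun i => decide (i ∈ T)) = #T := by
  simp [weight]

lemma weight_embed {F : Finset (Fin n)} (hF : #F = d) {g : Fin n → Bool}
    (hg : ∀ i ∈ F, g i = false) (u : Fin d → Bool) :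
    weight (embed F hF g u) = weight u + weight g := by
  have hF_part : ∑ i ∈ F, (if embed F hF g u i = true then 1 else 0) = weight u := by
    rw [weight, card_filter, ← sum_coe_sort F,
      ← (F.orderIsoOfFin hF).toEquiv.sum_comp]
    refine sum_congr rfl fun a _ => ?_
    simp only [embed, OrderIso.coe_toEquiv, coe_mem, dite_true, Subtype.coe_eta,
      OrderIso.symm_apply_apply]
  have hFc_part : ∑ i ∈ Fᶜ, (if embed F hF g u i = true then 1 else 0) = weight g := by
    have hg_zero : ∑ i ∈ F, (if g i = true then 1 else 0) = 0 :=
      sum_eq_zero fun i hi => by rw [hg i hi, if_neg Bool.false_ne_true]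
    rw [weight, card_filter, ← sum_add_sum_compl F, hg_zero, zero_add]
    exact sum_congr rfl fun i hi => by rw [embed, dif_neg (mem_compl.mp hi)]
  rw [weight, card_filter, ← sum_add_sum_compl F, hF_part, hFc_part]

def W8 : Set (Fin 3 → Bool) :=
  {![true, true, false], ![true, false, true], ![false, true, true]}

/-- The vertices of `Q_3` of weight `≡ -w (mod 3)` are those of weight 2 or those of
weight 1, i.e. `W₈` or its image under complementing all coordinates. -/
lemma exactCopy_W8_weight {w : ℕ} (hw : w % 3 ≠ 0) :
    ExactCopy 3 W8 {u | (weight u + w) % 3 = 0} := by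
  have hset : {u : Fin 3 → Bool | (weight u + w) % 3 = 0} =
      {u | (weight u + w % 3) % 3 = 0} := by
    simp only [Nat.add_mod_mod]
  rw [hset]
  rcases (by omega : w % 3 = 1 ∨ w % 3 = 2) with h | h <;> rw [h]
  · refine ⟨1, fun _ => false, ?_⟩
    ext u
    simp only [W8, Set.mem_image, Set.mem_insert_iff, Set.mem_singleton_iff,
      Set.mem_ofPred_eq]
    revert u
    decide
  · refine ⟨1, fun _ => true, ?_⟩
    ext u
    simp only [W8, Set.mem_image, Set.mem_insert_iff, Set.mem_singleton_iff,
      Set.mem_ofPred_eq]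
    revert u
    decide

lemma isGood_W8_weight_mod_three {F : Finset (Fin n)} (hF : #F = 3) {g : Fin n → Bool}
    (hg : ∀ i ∈ F, g i = false) (hw : weight g % 3 ≠ 0) :
    IsGood W8 {x | weight x % 3 = 0} F hF g := by
  simp only [IsGood, Set.mem_ofPred_eq, weight_embed hF hg]
  exact exactCopy_W8_weight hw

/-- The sub-cube with flip set `F` and fixed part the indicator of `T ⊆ Fᶜ` is good as soon as
`#T ≢ 0 (mod 3)`, which holds for at least `(2 ^ (n - 3) - 1) * 2 / 3` of the sets `T`. -/
lemma choose_mul_le_goodCount_W8 (n : ℕ) :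
    n.choose 3 * 2 ^ (n - 3) * 2 ≤
      3 * goodCount 3 W8 n {x | weight x % 3 = 0} + 2 * n.choose 3 := by
  classical
  set A : Finset (Σ _ : Finset (Fin n), Finset (Fin n)) :=
    (powersetCard 3 univ).sigma fun F => {T ∈ Fᶜ.powerset | ¬#T % 3 = 0}
  have hfiber : ∀ F ∈ powersetCard 3 (univ : Finset (Fin n)),
      2 ^ (n - 3) * 2 ≤ 3 * #{T ∈ Fᶜ.powerset | ¬#T % 3 = 0} + 2 := by
    intro F hF
    have hFc : #Fᶜ = n - 3 := by
      rw [card_compl, (mem_powersetCard_univ.mp hF), Fintype.card_fin]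
    have hsplit := card_filter_add_card_filter_not (s := Fᶜ.powerset) (fun T => #T % 3 = 0)
    have hzero := three_mul_modThreeCount_zero_le Fᶜ
    rw [card_powerset, hFc] at hsplit
    rw [hFc, modThreeCount] at hzero
    omega
  have hA : #A ≤ goodCount 3 W8 n {x | weight x % 3 = 0} := by
    rw [goodCount_eq_card_goodCubes]
    refine card_le_card_of_injOn (fun q => (q.1, fun i => decide (i ∈ q.2))) ?_ ?_
    · rintro ⟨F, T⟩ hq
      obtain ⟨hF, hT⟩ := mem_sigma.mp hq
      obtain ⟨hTF, hT3⟩ := mem_filter.mp hT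
      have hF3 : #F = 3 := mem_powersetCard_univ.mp hF
      have hg : ∀ i ∈ F, decide (i ∈ T) = false :=
        fun i hi => decide_eq_false fun hiT => mem_compl.mp (mem_powerset.mp hTF hiT) hi
      exact mem_filter.mpr ⟨mem_univ _, hF3, hg,
        isGood_W8_weight_mod_three hF3 hg (by rwa [weight_indicator])⟩
    · rintro ⟨F₁, T₁⟩ - ⟨F₂, T₂⟩ - h
      simp only [Prod.mk.injEq] at h
      obtain ⟨rfl, hT⟩ := h
      have hT : T₁ = T₂ := by
        ext i
        simpa using congrFun hT i
      rw [hT]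
  calc n.choose 3 * 2 ^ (n - 3) * 2
      = ∑ _F ∈ powersetCard 3 (univ : Finset (Fin n)), 2 ^ (n - 3) * 2 := by
        rw [sum_const, card_powersetCard, card_univ, Fintype.card_fin, smul_eq_mul, mul_assoc]
    _ ≤ ∑ F ∈ powersetCard 3 (univ : Finset (Fin n)),
          (3 * #{T ∈ Fᶜ.powerset | ¬#T % 3 = 0} + 2) := sum_le_sum hfiber
    _ = 3 * #A + 2 * n.choose 3 := by
        rw [sum_add_distrib, ← mul_sum, sum_const, card_sigma, card_powersetCard, card_univ,
          Fintype.card_fin, smul_eq_mul, mul_comm _ 2]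
    _ ≤ 3 * goodCount 3 W8 n {x | weight x % 3 = 0} + 2 * n.choose 3 := by omega

lemma exD_W8_ge (hn : 3 ≤ n) : 2 / 3 - 2 / 3 * (1 / 2 : ℝ) ^ (n - 3) ≤ exD 3 W8 n := by
  refine le_trans ?_ (gFrac_le_exD W8 {x | weight x % 3 = 0})
  have hpos : (0 : ℝ) < n.choose 3 * 2 ^ (n - 3) := by
    have := Nat.choose_pos hn
    positivity
  have hcount : (n.choose 3 * 2 ^ (n - 3) * 2 : ℝ) ≤
      3 * goodCount 3 W8 n {x | weight x % 3 = 0} + 2 * n.choose 3 := by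
    exact_mod_cast choose_mul_le_goodCount_W8 n
  have hpow : (1 / 2 : ℝ) ^ (n - 3) * 2 ^ (n - 3) = 1 := by
    rw [← mul_pow]
    norm_num
  rw [gFrac, le_div_iff₀ hpos]
  linear_combination hcount / 3 - 2 / 3 * n.choose 3 * hpow

end Construction

end CubeDensity

/-- λ(W₈, 3) ≥ 2/3, where W₈ = {(1,1,0),(1,0,1),(0,1,1)} consists of the three vertices
of weight 2 in Q₃. -/
theorem dCubeDensity_W8_ge :
    ∃ L : ℝ,
      Filter.Tendsto
        (fun n => CubeDensity.exD 3
          ({![true, true, false], ![true, false, true],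
            ![false, true, true]} : Set (Fin 3 → Bool)) n)
        Filter.atTop (nhds L) ∧ 2 / 3 ≤ L := by
  obtain ⟨L, hL⟩ := CubeDensity.exists_tendsto_exD 3 CubeDensity.W8
  have hpow : Tendsto (fun n : ℕ => (1 / 2 : ℝ) ^ (n - 3)) atTop (nhds 0) :=
    (tendsto_pow_atTop_nhds_zero_of_lt_one (by norm_num) (by norm_num)).comp
      (tendsto_sub_atTop_nat 3)
  have hlower : Tendsto (fun n : ℕ => 2 / 3 - 2 / 3 * (1 / 2 : ℝ) ^ (n - 3)) atTop
      (nhds (2 / 3)) := by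
    simpa using tendsto_const_nhds.sub (hpow.const_mul (2 / 3 : ℝ))
  exact ⟨L, hL, le_of_tendsto_of_tendsto hlower hL
    (eventually_atTop.2 ⟨3, fun n hn => CubeDensity.exD_W8_ge hn⟩)⟩
end
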